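/- arXiv:2605.09526 — 4 statements merged into one kernel-verified Lean document; each statement's English description precedes it below -/
import Mathlib

section
/- Let b ∈ ℝ and let N be a refined lattice family such that each N_{g,n} is a symmetric function of its n arguments and such that the asymmetric recursion holds at every (g,n,L) with 2g−2+n > 1 and L₁+⋯+L_n even. Then for every (g,n) with 2g−2+n > 1 and every L ∈ (ℤ_{>0})^n with L₁+⋯+L_n even, the symmetric recursion holds: 2(Σ_{i=1}^n L_i)·N_{g,n}(L) = Σ_{i≠j, 1≤i,j≤n} Σ_{p>0} p·[L_i+L_j−p]_+ · N_{g,n−1}(p, L with L_i and L_j removed) + b·Σ_{i=1}^n Σ_{p>0} p(L_i−1)·[L_i−p]_+ · N_{g−1/2,n}(p, L with L_i removed) + Σ_{i=1}^n Σ_{p,q>0} pq·[L_i−p−q]_+ · ( (1+b)·N_{g−1,n+1}(p,q, L with L_i removed) + 2·Σ_{g₁+g₂=g, I₁⊔I₂=[n]∖{i}} N_{g₁,1+|I₁|}(p,L_{I₁})·N_{g₂,1+|I₂|}(q,L_{I₂}) ). -/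
open scoped BigOperators

noncomputable section

/-- The ramp function `[x]₊ = max x 0`. -/
def ramp (x : ℝ) : ℝ := max x 0

/-- The kernel `𝓡(L₁, L_m, p)`. -/
def kerR (L1 Lm p : ℝ) : ℝ :=
  (1 / (2 * L1)) * (ramp (L1 + Lm - p) - ramp (-L1 + Lm - p) + ramp (L1 - Lm - p))

/-- The kernel `𝓔(L₁, p)`. -/
def kerE (L1 p : ℝ) : ℝ := (1 / (2 * L1)) * ramp (L1 - p)

/-- The kernel `𝓓(L₁, p, q)`. -/
def kerD (L1 p q : ℝ) : ℝ := (1 / L1) * ramp (L1 - p - q)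

/-- The sublist of entries of `L` whose (0-based) index lies in `S`, in order. -/
def selectIdxs {α : Type*} (L : List α) (S : Finset ℕ) : List α :=
  L.zipIdx.filterMap fun p => if p.2 ∈ S then some p.1 else none

/-- The sublist of entries of `L` whose (0-based) index does not lie in `S`, in order. -/
def removeIdxs {α : Type*} (L : List α) (S : Finset ℕ) : List α :=
  L.zipIdx.filterMap fun p => if p.2 ∈ S then none else some p.1

/-- A refined lattice family is indexed by `h = 2g ∈ ℤ` and a tuple of boundary lengths
(a list); by convention it vanishes when `g < 0` or `2g - 2 + n ≤ 0`. -/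
def ZeroConvention (N : ℤ → List ℤ → ℝ) : Prop :=
  ∀ (h : ℤ) (L : List ℤ), h < 0 ∨ h + (L.length : ℤ) ≤ 2 → N h L = 0

/-- The family vanishes on tuples of positive integers with odd sum. -/
def ParitySupported (N : ℤ → List ℤ → ℝ) : Prop :=
  ∀ (h : ℤ) (L : List ℤ), (∀ x ∈ L, 0 < x) → ¬ Even L.sum → N h L = 0

/-- The initial conditions for `N_{0,3}`, `N_{1/2,2}` and `N_{1,1}` (recall `h = 2g`). -/
def InitialConditions (b : ℝ) (N : ℤ → List ℤ → ℝ) : Prop :=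
  (∀ L1 L2 L3 : ℤ, 0 < L1 → 0 < L2 → 0 < L3 →
    N 0 [L1, L2, L3] = (1 + (-1 : ℝ) ^ (L1 + L2 + L3)) / 2 * (1 / 2)) ∧
  (∀ L1 L2 : ℤ, 0 < L1 → 0 < L2 →
    N 1 [L1, L2] = (1 + (-1 : ℝ) ^ (L1 + L2)) / 2 *
      (b * (((max L1 L2 : ℤ) : ℝ) - 1) / 4)) ∧
  (∀ L1 : ℤ, 0 < L1 →
    N 2 [L1] = (1 + (-1 : ℝ) ^ L1) / 2 *
      (((1 + b) * ((L1 : ℝ) ^ 2 - 4) +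
        b ^ 2 * (5 * (L1 : ℝ) ^ 2 - 12 * (L1 : ℝ) + 4)) / 96))

/-- The asymmetric recursion at `(g, n, L)` with `h = 2g`, `L = L₁ :: T`, `n = 1 + T.length`.
All sums over `p, q ∈ ℤ_{>0}` are finite because the kernels vanish for large `p, q`;
they are written here as sums up to the corresponding vanishing threshold. -/
def AsymRecAt (b : ℝ) (N : ℤ → List ℤ → ℝ) (h : ℤ) (L1 : ℤ) (T : List ℤ) : Prop :=
  N h (L1 :: T) =
    (∑ m ∈ Finset.range T.length, ∑ p ∈ Finset.Icc 1 (L1 + T.getD m 0),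
        (p : ℝ) * kerR (L1 : ℝ) ((T.getD m 0 : ℤ) : ℝ) (p : ℝ) * N h (p :: T.eraseIdx m))
    + b * (∑ p ∈ Finset.Icc 1 L1,
        (p : ℝ) * ((L1 : ℝ) - 1) * kerE (L1 : ℝ) (p : ℝ) * N (h - 1) (p :: T))
    + ∑ p ∈ Finset.Icc 1 L1, ∑ q ∈ Finset.Icc 1 L1,
        (p : ℝ) * (q : ℝ) * kerD (L1 : ℝ) (p : ℝ) (q : ℝ) *
          (((1 + b) / 2) * N (h - 2) (p :: q :: T)
            + ∑ h1 ∈ Finset.Icc 0 h, ∑ S ∈ (Finset.range T.length).powerset,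
                N h1 (p :: selectIdxs T S) * N (h - h1) (q :: removeIdxs T S))

/-- The family satisfies the asymmetric recursion at every `(g, n, L)` with
`2g - 2 + n > 1`, `L ∈ (ℤ_{>0})ⁿ` and `L₁ + ⋯ + L_n` even. -/
def AsymRecursion (b : ℝ) (N : ℤ → List ℤ → ℝ) : Prop :=
  ∀ (h : ℤ) (L1 : ℤ) (T : List ℤ), 0 < L1 → (∀ x ∈ T, 0 < x) →
    3 < h + (1 + (T.length : ℤ)) → Even (L1 + T.sum) → AsymRecAt b N h L1 T

/-- The symmetric recursion at `(g, n, L)` with `h = 2g`. -/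
def SymRecAt (b : ℝ) (N : ℤ → List ℤ → ℝ) (h : ℤ) (L : List ℤ) : Prop :=
  2 * (L.sum : ℝ) * N h L =
    (∑ i ∈ Finset.range L.length, ∑ j ∈ (Finset.range L.length).erase i,
        ∑ p ∈ Finset.Icc 1 (L.getD i 0 + L.getD j 0),
          (p : ℝ) * ramp (((L.getD i 0 : ℤ) : ℝ) + ((L.getD j 0 : ℤ) : ℝ) - (p : ℝ)) *
            N h (p :: removeIdxs L {i, j}))
    + b * (∑ i ∈ Finset.range L.length, ∑ p ∈ Finset.Icc 1 (L.getD i 0),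
        (p : ℝ) * (((L.getD i 0 : ℤ) : ℝ) - 1) *
          ramp (((L.getD i 0 : ℤ) : ℝ) - (p : ℝ)) * N (h - 1) (p :: removeIdxs L {i}))
    + ∑ i ∈ Finset.range L.length, ∑ p ∈ Finset.Icc 1 (L.getD i 0),
        ∑ q ∈ Finset.Icc 1 (L.getD i 0),
          (p : ℝ) * (q : ℝ) * ramp (((L.getD i 0 : ℤ) : ℝ) - (p : ℝ) - (q : ℝ)) *
            ((1 + b) * N (h - 2) (p :: q :: removeIdxs L {i})
              + 2 * ∑ h1 ∈ Finset.Icc 0 h,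
                  ∑ S ∈ ((Finset.range L.length).erase i).powerset,
                    N h1 (p :: selectIdxs L S) *
                      N (h - h1) (q :: selectIdxs L (((Finset.range L.length).erase i) \ S)))

/-!
Put `L_i` in front (allowed by the symmetry of `N`), apply the asymmetric recursion, multiply
by `2 L_i` and sum over `i`. The kernels `2 L₁ 𝓔(L₁, p) = [L₁ - p]₊` and
`2 L₁ 𝓓(L₁, p, q) = 2 [L₁ - p - q]₊` are those of the symmetric recursion, while
`2 L₁ 𝓡(L₁, L_m, p) = [L₁ + L_m - p]₊ - [L_m - L₁ - p]₊ + [L₁ - L_m - p]₊`: the last two terms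
cancel in the sum over ordered pairs `(i, j)`, because removing the entries `i, j` of `L` does
not depend on their order.
-/

section IndexLists

variable {α : Type*}

def filterIdx (p : ℕ → Prop) [DecidablePred p] (L : List α) : List α :=
  L.zipIdx.filterMap fun x => if p x.2 then some x.1 else none

lemma selectIdxs_eq_filterIdx (L : List α) (S : Finset ℕ) :
    selectIdxs L S = filterIdx (· ∈ S) L := rfl

lemma removeIdxs_eq_filterIdx (L : List α) (S : Finset ℕ) :
    removeIdxs L S = filterIdx (· ∉ S) L := by
  simp only [removeIdxs, filterIdx, ite_not]

lemma filterIdx_congr {p q : ℕ → Prop} [DecidablePred p] [DecidablePred q] {L : List α}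
    (h : ∀ k < L.length, p k ↔ q k) : filterIdx p L = filterIdx q L :=
  List.filterMap_congr fun x hx => by
    simp only [h x.2 (by simpa using List.snd_lt_of_mem_zipIdx hx)]

lemma filterIdx_true (L : List α) : filterIdx (fun _ => True) L = L := by
  simp [filterIdx]

lemma filterIdx_cons (p : ℕ → Prop) [DecidablePred p] (a : α) (L : List α) :
    filterIdx p (a :: L) =
      if p 0 then a :: filterIdx (fun k => p (k + 1)) L else filterIdx (fun k => p (k + 1)) L := by
  simp only [filterIdx, List.zipIdx_cons, List.zipIdx_succ, List.filterMap_cons, List.filterMap_map]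
  split_ifs <;> rfl

def shiftIdx (i m : ℕ) : ℕ := if m < i then m else m + 1

lemma shiftIdx_ne (i m : ℕ) : shiftIdx i m ≠ i := by
  unfold shiftIdx; split <;> omega

lemma shiftIdx_injective (i : ℕ) : Function.Injective (shiftIdx i) := by
  intro m m'; unfold shiftIdx; split <;> split <;> omega

lemma shiftIdx_succ_succ (i m : ℕ) : shiftIdx (i + 1) (m + 1) = shiftIdx i m + 1 := by
  unfold shiftIdx; split <;> split <;> omega

lemma image_shiftIdx_range {i n : ℕ} (hi : i < n) :
    (Finset.range (n - 1)).image (shiftIdx i) = (Finset.range n).erase i := by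
  ext k
  simp only [Finset.mem_image, Finset.mem_range, Finset.mem_erase, shiftIdx]
  constructor
  · rintro ⟨m, hm, rfl⟩; split <;> omega
  · intro hk
    refine ⟨if k < i then k else k - 1, ?_, ?_⟩ <;> split <;> (try split) <;> omega

lemma filterIdx_eraseIdx {p q : ℕ → Prop} [DecidablePred p] [DecidablePred q] (L : List α)
    {i : ℕ} (hi : ¬ q i) (hpq : ∀ m, q (shiftIdx i m) ↔ p m) :
    filterIdx p (L.eraseIdx i) = filterIdx q L := by
  induction L generalizing i p q with
  | nil => rfl
  | cons a L ih =>
    cases i with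
    | zero =>
      rw [List.eraseIdx_cons_zero, filterIdx_cons, if_neg hi]
      exact filterIdx_congr fun m _ => (hpq m).symm
    | succ i =>
      have hpq' : ∀ m, q (shiftIdx i m + 1) ↔ p (m + 1) := fun m => by
        simpa only [shiftIdx_succ_succ] using hpq (m + 1)
      have h0 : p 0 ↔ q 0 := (hpq 0).symm
      rw [List.eraseIdx_cons_succ, filterIdx_cons, filterIdx_cons,
        ih (q := fun k => q (k + 1)) hi hpq']
      simp only [h0]

lemma removeIdxs_singleton (L : List α) (i : ℕ) : removeIdxs L {i} = L.eraseIdx i := by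
  rw [removeIdxs_eq_filterIdx, ← filterIdx_true (L.eraseIdx i),
    filterIdx_eraseIdx (q := (· ∉ ({i} : Finset ℕ))) L (by simp) fun m => by simp [shiftIdx_ne]]

lemma eraseIdx_eraseIdx (L : List α) (i m : ℕ) :
    (L.eraseIdx i).eraseIdx m = removeIdxs L {i, shiftIdx i m} := by
  rw [← removeIdxs_singleton, removeIdxs_eq_filterIdx, removeIdxs_eq_filterIdx,
    filterIdx_eraseIdx (q := (· ∉ ({i, shiftIdx i m} : Finset ℕ))) L (by simp)
      fun k => by simp [shiftIdx_ne, (shiftIdx_injective i).eq_iff]]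

lemma selectIdxs_eraseIdx (L : List α) (i : ℕ) (S : Finset ℕ) :
    selectIdxs (L.eraseIdx i) S = selectIdxs L (S.image (shiftIdx i)) :=
  filterIdx_eraseIdx L (by simp [shiftIdx_ne]) fun _ => (shiftIdx_injective i).mem_finset_image

lemma removeIdxs_eraseIdx (L : List α) (i : ℕ) (S : Finset ℕ) :
    removeIdxs (L.eraseIdx i) S = removeIdxs L (insert i (S.image (shiftIdx i))) := by
  rw [removeIdxs_eq_filterIdx, removeIdxs_eq_filterIdx,
    filterIdx_eraseIdx (q := (· ∉ insert i (S.image (shiftIdx i)))) L (by simp)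
      fun m => by simp [shiftIdx_ne, (shiftIdx_injective i).mem_finset_image]]

lemma removeIdxs_eq_selectIdxs_sdiff (L : List α) (S : Finset ℕ) :
    removeIdxs L S = selectIdxs L (Finset.range L.length \ S) := by
  rw [removeIdxs_eq_filterIdx]
  exact filterIdx_congr fun k hk => by simp [hk]

lemma getD_eraseIdx (L : List α) (i m : ℕ) (d : α) :
    (L.eraseIdx i).getD m d = L.getD (shiftIdx i m) d := by
  simp only [List.getD_eq_getElem?_getD, List.getElem?_eraseIdx, shiftIdx]
  split <;> rfl

lemma sum_range_length_eraseIdx {M : Type*} [AddCommMonoid M] {L : List α} {i : ℕ}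
    (hi : i < L.length) (F : ℕ → M) :
    ∑ m ∈ Finset.range (L.eraseIdx i).length, F (shiftIdx i m) =
      ∑ j ∈ (Finset.range L.length).erase i, F j := by
  rw [List.length_eraseIdx_of_lt hi, ← image_shiftIdx_range hi,
    Finset.sum_image (shiftIdx_injective i).injOn]

lemma sum_powerset_range_length_eraseIdx {M : Type*} [AddCommMonoid M] {L : List α} {i : ℕ}
    (hi : i < L.length) (F : List α → List α → M) :
    ∑ S ∈ (Finset.range (L.eraseIdx i).length).powerset,
        F (selectIdxs (L.eraseIdx i) S) (removeIdxs (L.eraseIdx i) S) =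
      ∑ S ∈ ((Finset.range L.length).erase i).powerset,
        F (selectIdxs L S) (selectIdxs L ((Finset.range L.length).erase i \ S)) := by
  have himage : ((Finset.range L.length).erase i).powerset =
      (Finset.range (L.length - 1)).powerset.image (·.image (shiftIdx i)) := by
    rw [← image_shiftIdx_range hi, Finset.powerset_image]
  rw [himage, Finset.sum_image (Finset.image_injective (shiftIdx_injective i)).injOn,
    List.length_eraseIdx_of_lt hi]
  refine Finset.sum_congr rfl fun S _ => ?_
  rw [selectIdxs_eraseIdx, removeIdxs_eraseIdx, removeIdxs_eq_selectIdxs_sdiff,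
    Finset.sdiff_insert, ← Finset.erase_sdiff_comm]

lemma List.getD_cons_eraseIdx_perm {L : List α} {i : ℕ} (hi : i < L.length) (d : α) :
    (L.getD i d :: L.eraseIdx i).Perm L := by
  simpa only [List.getD_eq_getElem _ _ hi] using List.getElem_cons_eraseIdx_perm hi

end IndexLists

lemma two_mul_mul_kerR {L1 : ℝ} (hL1 : L1 ≠ 0) (Lm p : ℝ) :
    2 * L1 * kerR L1 Lm p = ramp (L1 + Lm - p) - ramp (Lm - L1 - p) + ramp (L1 - Lm - p) := by
  rw [kerR, neg_add_eq_sub]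
  field_simp

lemma two_mul_mul_kerE {L1 : ℝ} (hL1 : L1 ≠ 0) (p : ℝ) : 2 * L1 * kerE L1 p = ramp (L1 - p) := by
  rw [kerE]
  field_simp

lemma two_mul_mul_kerD {L1 : ℝ} (hL1 : L1 ≠ 0) (p q : ℝ) :
    2 * L1 * kerD L1 p q = 2 * ramp (L1 - p - q) := by
  rw [kerD]
  field_simp

def symTermR (N : ℤ → List ℤ → ℝ) (h : ℤ) (L : List ℤ) (i j : ℕ) : ℝ :=
  ∑ p ∈ Finset.Icc 1 (L.getD i 0 + L.getD j 0),
    (p : ℝ) * ramp (((L.getD i 0 : ℤ) : ℝ) + ((L.getD j 0 : ℤ) : ℝ) - (p : ℝ)) *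
      N h (p :: removeIdxs L {i, j})

def skewTermR (N : ℤ → List ℤ → ℝ) (h : ℤ) (L : List ℤ) (i j : ℕ) : ℝ :=
  ∑ p ∈ Finset.Icc 1 (L.getD i 0 + L.getD j 0),
    (p : ℝ) * ramp (((L.getD i 0 : ℤ) : ℝ) - ((L.getD j 0 : ℤ) : ℝ) - (p : ℝ)) *
      N h (p :: removeIdxs L {i, j})

def symTermE (N : ℤ → List ℤ → ℝ) (h : ℤ) (L : List ℤ) (i : ℕ) : ℝ :=
  ∑ p ∈ Finset.Icc 1 (L.getD i 0),
    (p : ℝ) * (((L.getD i 0 : ℤ) : ℝ) - 1) *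
      ramp (((L.getD i 0 : ℤ) : ℝ) - (p : ℝ)) * N (h - 1) (p :: removeIdxs L {i})

def symTermD (b : ℝ) (N : ℤ → List ℤ → ℝ) (h : ℤ) (L : List ℤ) (i : ℕ) : ℝ :=
  ∑ p ∈ Finset.Icc 1 (L.getD i 0), ∑ q ∈ Finset.Icc 1 (L.getD i 0),
    (p : ℝ) * (q : ℝ) * ramp (((L.getD i 0 : ℤ) : ℝ) - (p : ℝ) - (q : ℝ)) *
      ((1 + b) * N (h - 2) (p :: q :: removeIdxs L {i})
        + 2 * ∑ h1 ∈ Finset.Icc 0 h,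
            ∑ S ∈ ((Finset.range L.length).erase i).powerset,
              N h1 (p :: selectIdxs L S) *
                N (h - h1) (q :: selectIdxs L (((Finset.range L.length).erase i) \ S)))

lemma symRecAt_iff (b : ℝ) (N : ℤ → List ℤ → ℝ) (h : ℤ) (L : List ℤ) :
    SymRecAt b N h L ↔
      2 * (L.sum : ℝ) * N h L =
        ∑ i ∈ Finset.range L.length, ∑ j ∈ (Finset.range L.length).erase i, symTermR N h L i j
          + b * ∑ i ∈ Finset.range L.length, symTermE N h L i
          + ∑ i ∈ Finset.range L.length, symTermD b N h L i :=
  Iff.rfl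

section AsymTerms

variable (b : ℝ) (N : ℤ → List ℤ → ℝ) (h : ℤ) {L : List ℤ} {i : ℕ}

lemma two_mul_sum_kerR (hi : i < L.length) (hc : ((L.getD i 0 : ℤ) : ℝ) ≠ 0) :
    2 * ((L.getD i 0 : ℤ) : ℝ) *
        ∑ m ∈ Finset.range (L.eraseIdx i).length,
          ∑ p ∈ Finset.Icc 1 (L.getD i 0 + (L.eraseIdx i).getD m 0),
            (p : ℝ) * kerR ((L.getD i 0 : ℤ) : ℝ) (((L.eraseIdx i).getD m 0 : ℤ) : ℝ) (p : ℝ) *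
              N h (p :: (L.eraseIdx i).eraseIdx m) =
      ∑ j ∈ (Finset.range L.length).erase i,
        (symTermR N h L i j + skewTermR N h L i j - skewTermR N h L j i) := by
  simp only [getD_eraseIdx, eraseIdx_eraseIdx, Finset.mul_sum]
  rw [sum_range_length_eraseIdx hi (fun j => ∑ p ∈ Finset.Icc 1 (L.getD i 0 + L.getD j 0),
    2 * ((L.getD i 0 : ℤ) : ℝ) * ((p : ℝ) * kerR ((L.getD i 0 : ℤ) : ℝ) ((L.getD j 0 : ℤ) : ℝ) p *
      N h (p :: removeIdxs L {i, j})))]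
  refine Finset.sum_congr rfl fun j _ => ?_
  rw [symTermR, skewTermR, skewTermR, add_comm (L.getD j 0), Finset.pair_comm j i,
    ← Finset.sum_add_distrib, ← Finset.sum_sub_distrib]
  refine Finset.sum_congr rfl fun p _ => ?_
  linear_combination ((p : ℝ) * N h (p :: removeIdxs L {i, j})) *
    two_mul_mul_kerR hc ((L.getD j 0 : ℤ) : ℝ) p

lemma two_mul_sum_kerE (hc : ((L.getD i 0 : ℤ) : ℝ) ≠ 0) :
    2 * ((L.getD i 0 : ℤ) : ℝ) *
        (b * ∑ p ∈ Finset.Icc 1 (L.getD i 0),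
          (p : ℝ) * (((L.getD i 0 : ℤ) : ℝ) - 1) * kerE ((L.getD i 0 : ℤ) : ℝ) (p : ℝ) *
            N (h - 1) (p :: L.eraseIdx i)) =
      b * symTermE N h L i := by
  rw [symTermE, removeIdxs_singleton, mul_left_comm, Finset.mul_sum]
  congr 1
  refine Finset.sum_congr rfl fun p _ => ?_
  linear_combination ((p : ℝ) * (((L.getD i 0 : ℤ) : ℝ) - 1) * N (h - 1) (p :: L.eraseIdx i)) *
    two_mul_mul_kerE hc p

lemma two_mul_sum_kerD (hi : i < L.length) (hc : ((L.getD i 0 : ℤ) : ℝ) ≠ 0) :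
    2 * ((L.getD i 0 : ℤ) : ℝ) *
        ∑ p ∈ Finset.Icc 1 (L.getD i 0), ∑ q ∈ Finset.Icc 1 (L.getD i 0),
          (p : ℝ) * (q : ℝ) * kerD ((L.getD i 0 : ℤ) : ℝ) (p : ℝ) (q : ℝ) *
            (((1 + b) / 2) * N (h - 2) (p :: q :: L.eraseIdx i)
              + ∑ h1 ∈ Finset.Icc 0 h, ∑ S ∈ (Finset.range (L.eraseIdx i).length).powerset,
                  N h1 (p :: selectIdxs (L.eraseIdx i) S) *
                    N (h - h1) (q :: removeIdxs (L.eraseIdx i) S)) =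
      symTermD b N h L i := by
  rw [symTermD, removeIdxs_singleton, Finset.mul_sum]
  refine Finset.sum_congr rfl fun p _ => ?_
  rw [Finset.mul_sum]
  refine Finset.sum_congr rfl fun q _ => ?_
  rw [Finset.sum_congr rfl fun h1 _ => sum_powerset_range_length_eraseIdx hi
    fun A B => N h1 (p :: A) * N (h - h1) (q :: B)]
  linear_combination (p * q * ((1 + b) / 2 * N (h - 2) (p :: q :: L.eraseIdx i) +
    ∑ h1 ∈ Finset.Icc 0 h, ∑ S ∈ ((Finset.range L.length).erase i).powerset,
      N h1 (p :: selectIdxs L S) *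
        N (h - h1) (q :: selectIdxs L (((Finset.range L.length).erase i) \ S))) : ℝ) *
    two_mul_mul_kerD hc p q

end AsymTerms

lemma Finset.sum_sum_erase_comm {ι M : Type*} [DecidableEq ι] [AddCommGroup M] (s : Finset ι)
    (f : ι → ι → M) :
    ∑ i ∈ s, ∑ j ∈ s.erase i, f j i = ∑ i ∈ s, ∑ j ∈ s.erase i, f i j := by
  have hdiag : ∀ g : ι → ι → M,
      ∑ i ∈ s, ∑ j ∈ s.erase i, g i j = ∑ i ∈ s, ∑ j ∈ s, g i j - ∑ i ∈ s, g i i := fun g => by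
    rw [← Finset.sum_sub_distrib]
    exact Finset.sum_congr rfl fun i hi => Finset.sum_erase_eq_sub hi
  rw [hdiag, hdiag, Finset.sum_comm]

lemma List.sum_range_getD {M : Type*} [AddCommMonoid M] (L : List M) :
    ∑ i ∈ Finset.range L.length, L.getD i 0 = L.sum := by
  rw [Finset.sum_range]
  simp

lemma asymRecAt_getD_eraseIdx {b : ℝ} {N : ℤ → List ℤ → ℝ} (hrec : AsymRecursion b N) {h : ℤ}
    {L : List ℤ} (hpos : ∀ x ∈ L, 0 < x) (hbig : 3 < h + (L.length : ℤ)) (heven : Even L.sum)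
    {i : ℕ} (hi : i < L.length) :
    AsymRecAt b N h (L.getD i 0) (L.eraseIdx i) := by
  have hperm := List.getD_cons_eraseIdx_perm hi 0
  refine hrec h _ _ (hpos _ (hperm.subset List.mem_cons_self))
    (fun x hx => hpos x ((List.eraseIdx_sublist L i).subset hx)) ?_ ?_
  · rw [List.length_eraseIdx_of_lt hi]
    omega
  · rwa [← List.sum_cons, hperm.sum_eq]

lemma two_mul_getD_mul_of_asymRecAt (b : ℝ) (N : ℤ → List ℤ → ℝ) (h : ℤ) {L : List ℤ} {i : ℕ}
    (hi : i < L.length) (hc : ((L.getD i 0 : ℤ) : ℝ) ≠ 0)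
    (hrec : AsymRecAt b N h (L.getD i 0) (L.eraseIdx i)) :
    2 * ((L.getD i 0 : ℤ) : ℝ) * N h (L.getD i 0 :: L.eraseIdx i) =
      ∑ j ∈ (Finset.range L.length).erase i,
          (symTermR N h L i j + skewTermR N h L i j - skewTermR N h L j i)
        + b * symTermE N h L i + symTermD b N h L i := by
  rw [hrec, mul_add, mul_add, two_mul_sum_kerR N h hi hc, two_mul_sum_kerE b N h hc,
    two_mul_sum_kerD b N h hi hc]

theorem symRec_of_asymRec_general (b : ℝ) (N : ℤ → List ℤ → ℝ)
    (hsym : ∀ (h : ℤ) (L L' : List ℤ), L.Perm L' → N h L = N h L')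
    (hrec : AsymRecursion b N) :
    ∀ (h : ℤ) (L : List ℤ), (∀ x ∈ L, 0 < x) → 0 < L.length →
      3 < h + (L.length : ℤ) → Even L.sum → SymRecAt b N h L := by
  intro h L hpos _ hbig heven
  have hterm : ∀ i ∈ Finset.range L.length, 2 * ((L.getD i 0 : ℤ) : ℝ) * N h L =
      ∑ j ∈ (Finset.range L.length).erase i,
          (symTermR N h L i j + skewTermR N h L i j - skewTermR N h L j i)
        + b * symTermE N h L i + symTermD b N h L i := by
    intro i hi
    rw [Finset.mem_range] at hi
    have hperm := List.getD_cons_eraseIdx_perm hi 0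
    have hc : 0 < L.getD i 0 := hpos _ (hperm.subset List.mem_cons_self)
    rw [hsym h L _ hperm.symm]
    exact two_mul_getD_mul_of_asymRecAt b N h hi (by positivity)
      (asymRecAt_getD_eraseIdx hrec hpos hbig heven hi)
  rw [symRecAt_iff, ← List.sum_range_getD, Int.cast_sum, Finset.mul_sum, Finset.sum_mul,
    Finset.sum_congr rfl hterm]
  simp only [Finset.sum_add_distrib, Finset.sum_sub_distrib, ← Finset.mul_sum,
    Finset.sum_sum_erase_comm _ (skewTermR N h L)]
  abel

/-- If a refined lattice family is symmetric in its arguments and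
satisfies the asymmetric recursion at every `(g,n,L)` with `2g-2+n > 1` and even total
boundary length, then it satisfies the symmetric recursion at every such `(g,n,L)`. -/
theorem symRec_of_asymRec (b : ℝ) (N : ℤ → List ℤ → ℝ)
    (hzero : ZeroConvention N)
    (hsym : ∀ (h : ℤ) (L L' : List ℤ), L.Perm L' → N h L = N h L')
    (hrec : AsymRecursion b N) :
    ∀ (h : ℤ) (L : List ℤ), (∀ x ∈ L, 0 < x) → 0 < L.length →
      3 < h + (L.length : ℤ) → Even L.sum → SymRecAt b N h L :=
  symRec_of_asymRec_general b N hsym hrec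
end
end

section
/- Let b ∈ ℝ and let N be a parity-supported refined lattice family satisfying the initial conditions and the asymmetric recursion at every (g,n,L) with 2g−2+n > 1 and L₁+⋯+L_n even. Then for every even L₁ ∈ ℤ_{>0}: N_{3/2,1}(L₁) = (b/46080)·(L₁²−4)·(L₁−4)·( (1+b)(17L₁²+38L₁−60) + 30b²(L₁²−L₁) ). -/
open scoped BigOperators

noncomputable section

/-!
At `(g, n) = (3/2, 1)` the recursion has no `𝓡`-terms, and its genus-splitting term vanishes
since a stable `(g, 1)` needs `g ≥ 1`. What remains is `b` times an `𝓔`-weighted sum of `N_{1,1}`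
plus `(1 + b)/2` times a `𝓓`-weighted double sum of `N_{1/2,2}`. With `L₁ = 2m`, the double sum
is regrouped along the diagonals `p + q = s`, on which the kernel `𝓓` is constant and the parity
weight keeps only even `s`. The diagonal sums and the remaining single sums are sums of
polynomials, evaluated in closed form by Faulhaber-type identities.
-/

open Finset

theorem max_eq_add_ramp_sub (x y : ℝ) : max x y = x + ramp (y - x) := by
  rcases le_total x y with h | h
  · rw [max_eq_right h, ramp, max_eq_left (by linarith)]; ring
  · rw [max_eq_left h, ramp, max_eq_right (by linarith)]; ring

theorem ramp_eq_zero {x : ℝ} (hx : x ≤ 0) : ramp x = 0 := max_eq_right hx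

theorem ramp_eq_self {x : ℝ} (hx : 0 ≤ x) : ramp x = x := max_eq_left hx

theorem sum_Icc_one_eq_sum_range {M : Type*} [AddCommMonoid M] (f : ℤ → M) (n : ℕ) :
    ∑ p ∈ Icc (1 : ℤ) n, f p = ∑ k ∈ range n, f (k + 1) := by
  rw [Int.Icc_eq_finset_map, sum_map]
  simp [add_comm]

theorem sum_range_two_mul {M : Type*} [AddCommMonoid M] (f : ℕ → M) (n : ℕ) :
    ∑ k ∈ range (2 * n), f k = ∑ k ∈ range n, (f (2 * k) + f (2 * k + 1)) := by
  induction n with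
  | zero => simp
  | succ n ih => rw [mul_add_one, sum_range_succ, sum_range_succ, sum_range_succ, ih, add_assoc]

theorem sum_Icc_one_two_mul {M : Type*} [AddCommMonoid M] (f : ℤ → M) (n : ℕ) :
    ∑ p ∈ Icc (1 : ℤ) (2 * n), f p = ∑ k ∈ range n, (f (2 * k + 1) + f (2 * k + 2)) := by
  rw [show (2 * n : ℤ) = ((2 * n : ℕ) : ℤ) by push_cast; ring, sum_Icc_one_eq_sum_range,
    sum_range_two_mul]
  push_cast
  simp only [add_assoc, one_add_one_eq_two]

theorem sum_Icc_Icc_eq_sum_fibers_add (L : ℤ) (G : ℤ → ℝ) (H : ℤ → ℤ → ℝ)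
    (hG : ∀ s, L < s → G s = 0) :
    ∑ p ∈ Icc 1 L, ∑ q ∈ Icc 1 L, G (p + q) * H p q
      = ∑ s ∈ Icc 1 L, G s * ∑ p ∈ Icc 1 (s - 1), H p (s - p) := by
  have shift : ∀ p ∈ Icc 1 L,
      ∑ q ∈ Icc 1 L, G (p + q) * H p q = ∑ s ∈ Icc (p + 1) L, G s * H p (s - p) := by
    intro p hp
    rw [mem_Icc] at hp
    calc ∑ q ∈ Icc 1 L, G (p + q) * H p q
        = ∑ s ∈ Icc (p + 1) (p + L), G s * H p (s - p) := by
          rw [← map_add_left_Icc, sum_map]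
          simp
      _ = ∑ s ∈ Icc (p + 1) L, G s * H p (s - p) := by
          refine (sum_subset (Icc_subset_Icc_right (by omega)) fun s hs hsL => ?_).symm
          simp only [mem_Icc, not_and, not_le] at hs hsL
          rw [hG s (hsL hs.1), zero_mul]
  rw [sum_congr rfl shift, sum_comm' (t' := Icc 1 L) (s' := fun s => Icc 1 (s - 1))
    (fun p s => by simp only [mem_Icc]; omega)]
  simp_rw [mul_sum]

theorem one_add_neg_one_zpow_div_two_of_even {n : ℤ} (h : Even n) :
    (1 + (-1 : ℝ) ^ n) / 2 = 1 := by
  rw [h.neg_one_zpow]; norm_num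

theorem one_add_neg_one_zpow_div_two_of_odd {n : ℤ} (h : Odd n) :
    (1 + (-1 : ℝ) ^ n) / 2 = 0 := by
  rw [h.neg_one_zpow]; norm_num

theorem sum_Icc_mul_sub_mul_max_sub_one (t : ℕ) :
    ∑ p ∈ Icc (1 : ℤ) (2 * t + 2 - 1),
        (p : ℝ) * ((2 * t + 2 - p : ℤ) : ℝ) * (((max p (2 * t + 2 - p) : ℤ) : ℝ) - 1)
      = t * (t + 1) * (11 * t ^ 2 + 25 * t + 12) / 6 := by
  have split : ∀ p : ℤ, (((max p (2 * t + 2 - p) : ℤ) : ℝ) - 1)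
      = ((p : ℝ) - 1) + ramp (2 * (t + 1 - p)) := by
    intro p
    push_cast
    rw [max_eq_add_ramp_sub]
    ring_nf
  have faulhaber₁ : ∀ (X : ℝ) (n : ℕ), ∑ k ∈ range n, ((k : ℝ) + 1) * (X - k) * k
      = ((n : ℝ) - 1) * n * (n + 1) * (4 * X - 3 * n + 2) / 12 := by
    intro X n
    induction n with
    | zero => simp
    | succ n ih => rw [sum_range_succ, ih]; push_cast; ring
  have faulhaber₂ : ∀ (X : ℝ) (n : ℕ),
      ∑ k ∈ range n, ((k : ℝ) + 1) * (2 * X + 1 - k) * (2 * (X - k))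
        = n * (n + 1) * (4 * X ^ 2 - 2 * (2 * n - 3) * X + (n - 1) * (n - 2)) / 2 := by
    intro X n
    induction n with
    | zero => simp
    | succ n ih => rw [sum_range_succ, ih]; push_cast; ring
  have sum_sub_one : ∑ p ∈ Icc (1 : ℤ) (2 * t + 2 - 1),
      (p : ℝ) * ((2 * t + 2 - p : ℤ) : ℝ) * ((p : ℝ) - 1)
      = (2 * t) * (2 * t + 1) * (2 * t + 2) * (2 * t + 3) / 12 := by
    rw [show (2 * t + 2 - 1 : ℤ) = ((2 * t + 1 : ℕ) : ℤ) by push_cast; ring,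
      sum_Icc_one_eq_sum_range]
    convert faulhaber₁ (2 * t + 1) (2 * t + 1) using 1
    · refine sum_congr rfl fun k _ => ?_
      push_cast
      ring
    · push_cast
      ring
  have sum_ramp : ∑ p ∈ Icc (1 : ℤ) (2 * t + 2 - 1),
      (p : ℝ) * ((2 * t + 2 - p : ℤ) : ℝ) * ramp (2 * (t + 1 - p))
      = t * (t + 1) ^ 2 * (t + 2) / 2 := by
    rw [← sum_subset (s₁ := Icc 1 (t : ℤ)) (Icc_subset_Icc_right (by omega))
      fun p hp hpt => ?_, sum_Icc_one_eq_sum_range]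
    · convert faulhaber₂ t t using 1
      · refine sum_congr rfl fun k hk => ?_
        have hkt : (k : ℝ) + 1 ≤ t := by exact_mod_cast mem_range.mp hk
        rw [ramp_eq_self (by push_cast; linarith)]
        push_cast
        ring
      · ring
    · simp only [mem_Icc, not_and, not_le] at hp hpt
      rw [ramp_eq_zero (by norm_cast; omega), mul_zero]
  simp_rw [split, mul_add, sum_add_distrib, sum_sub_one, sum_ramp]
  ring

theorem N_three_singleton_eq {b : ℝ} {N : ℤ → List ℤ → ℝ} (hzero : ZeroConvention N)
    (hrec : AsymRecursion b N) {L1 : ℤ} (hL1 : 0 < L1) (hev : Even L1) :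
    N 3 [L1] = b * ∑ p ∈ Icc 1 L1, (p : ℝ) * ((L1 : ℝ) - 1) * kerE L1 p * N 2 [p]
      + (1 + b) / 2 *
        ∑ p ∈ Icc 1 L1, ∑ q ∈ Icc 1 L1, (p : ℝ) * q * kerD L1 p q * N 1 [p, q] := by
  have no_splitting : ∀ p q : ℤ, ∑ h1 ∈ Icc (0 : ℤ) 3, N h1 [p] * N (3 - h1) [q] = 0 := by
    intro p q
    refine sum_eq_zero fun h1 hh1 => ?_
    rw [mem_Icc] at hh1
    rcases le_or_gt h1 1 with h | h
    · rw [hzero h1 [p] (Or.inr (by simp; omega)), zero_mul]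
    · rw [hzero (3 - h1) [q] (Or.inr (by simp; omega)), mul_zero]
  have h := hrec 3 L1 [] hL1 (by simp) (by norm_num) (by simpa using hev)
  simp only [AsymRecAt, List.length_nil, range_zero, sum_empty, powerset_empty, sum_singleton,
    selectIdxs, removeIdxs, List.zipIdx_nil, List.filterMap_nil, zero_add, no_splitting,
    add_zero] at h
  rw [h, show (3 : ℤ) - 1 = 2 by norm_num, show (3 : ℤ) - 2 = 1 by norm_num]
  simp_rw [mul_sum]
  congr! 3 with p - q -
  ring

theorem sum_mul_kerE_mul_N_one_one {b : ℝ} {N : ℤ → List ℤ → ℝ}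
    (hinit : InitialConditions b N) {m : ℕ} (hm : 0 < m) :
    ∑ p ∈ Icc (1 : ℤ) (2 * m),
        (p : ℝ) * (((2 * m : ℤ) : ℝ) - 1) * kerE ((2 * m : ℤ) : ℝ) p * N 2 [p]
      = (2 * m - 1) * (m ^ 2 - 1) * (m - 2) * ((1 + b) * (m + 2) + 5 * b ^ 2 * m) / 480 := by
  have faulhaber : ∀ (X : ℝ) (n : ℕ),
      ∑ k ∈ range n, (2 * (k : ℝ) + 2) * (2 * X - 2 * k - 2)
          * ((1 + b) * ((2 * k + 2) ^ 2 - 4) + b ^ 2 * (5 * (2 * k + 2) ^ 2 - 12 * (2 * k + 2) + 4))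
        = 4 / 5 * ((n : ℝ) - 1) * n * (n + 1) * ((1 + b) * (n + 2) * (5 * X - 4 * n - 2)
            + 5 * b ^ 2 * ((5 * n + 2) * X - 4 * n * (n + 1))) := by
    intro X n
    induction n with
    | zero => simp
    | succ n ih => rw [sum_range_succ, ih]; push_cast; ring
  have hm' : (m : ℝ) ≠ 0 := by positivity
  calc ∑ p ∈ Icc (1 : ℤ) (2 * m),
        (p : ℝ) * (((2 * m : ℤ) : ℝ) - 1) * kerE ((2 * m : ℤ) : ℝ) p * N 2 [p]
      = (2 * m - 1) / (384 * m) * ∑ k ∈ range m, (2 * (k : ℝ) + 2) * (2 * m - 2 * k - 2)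
          * ((1 + b) * ((2 * k + 2) ^ 2 - 4)
            + b ^ 2 * (5 * (2 * k + 2) ^ 2 - 12 * (2 * k + 2) + 4)) := by
        rw [sum_Icc_one_two_mul, mul_sum]
        refine sum_congr rfl fun k hk => ?_
        have hkm : (k : ℝ) + 1 ≤ m := by exact_mod_cast mem_range.mp hk
        have hramp :
            ramp (((2 * m : ℤ) : ℝ) - ((2 * k + 2 : ℤ) : ℝ)) = 2 * ((m : ℝ) - k - 1) := by
          push_cast
          rw [ramp_eq_self (by linarith)]
          ring
        rw [hinit.2.2 _ (by positivity), hinit.2.2 _ (by positivity),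
          one_add_neg_one_zpow_div_two_of_odd (by exact ⟨k, rfl⟩),
          one_add_neg_one_zpow_div_two_of_even (by exact ⟨k + 1, by ring⟩), kerE, kerE, hramp]
        push_cast
        field_simp
        ring
    _ = (2 * m - 1) * (m ^ 2 - 1) * (m - 2) * ((1 + b) * (m + 2) + 5 * b ^ 2 * m) / 480 := by
        rw [faulhaber]
        field_simp
        ring

theorem sum_mul_kerD_mul_N_half_two {b : ℝ} {N : ℤ → List ℤ → ℝ}
    (hinit : InitialConditions b N) {m : ℕ} (hm : 0 < m) :
    ∑ p ∈ Icc (1 : ℤ) (2 * m), ∑ q ∈ Icc (1 : ℤ) (2 * m),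
        (p : ℝ) * q * kerD ((2 * m : ℤ) : ℝ) p q * N 1 [p, q]
      = b * (m ^ 2 - 1) * (m - 2) * (11 * m ^ 2 + 10 * m - 9) / 720 := by
  have faulhaber : ∀ (X : ℝ) (n : ℕ),
      ∑ k ∈ range n, 2 * (X - k - 1) * (k * (k + 1) * (11 * k ^ 2 + 25 * k + 12) / 6)
        = ((n : ℝ) ^ 3 - n) * (3 * X * (22 * n ^ 2 + 35 * n + 2)
            - (55 * n ^ 3 + 117 * n ^ 2 + 35 * n - 18)) / 90 := by
    intro X n
    induction n with
    | zero => simp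
    | succ n ih => rw [sum_range_succ, ih]; push_cast; ring
  have hm' : (m : ℝ) ≠ 0 := by positivity
  calc ∑ p ∈ Icc (1 : ℤ) (2 * m), ∑ q ∈ Icc (1 : ℤ) (2 * m),
        (p : ℝ) * q * kerD ((2 * m : ℤ) : ℝ) p q * N 1 [p, q]
      = b / (8 * m) * ∑ p ∈ Icc (1 : ℤ) (2 * m), ∑ q ∈ Icc (1 : ℤ) (2 * m),
          ramp (2 * m - ((p + q : ℤ) : ℝ)) * ((1 + (-1 : ℝ) ^ (p + q)) / 2)
            * ((p : ℝ) * q * (((max p q : ℤ) : ℝ) - 1)) := by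
        rw [mul_sum]
        refine sum_congr rfl fun p hp => ?_
        rw [mul_sum]
        refine sum_congr rfl fun q hq => ?_
        rw [mem_Icc] at hp hq
        rw [hinit.2.1 p q (by omega) (by omega), kerD]
        push_cast
        rw [sub_sub]
        field_simp
        ring
    _ = b / (8 * m) * ∑ s ∈ Icc (1 : ℤ) (2 * m),
          ramp (2 * m - s) * ((1 + (-1 : ℝ) ^ s) / 2)
            * ∑ p ∈ Icc 1 (s - 1),
                (p : ℝ) * ((s - p : ℤ) : ℝ) * (((max p (s - p) : ℤ) : ℝ) - 1) := by
        congr 1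
        refine sum_Icc_Icc_eq_sum_fibers_add _
          (fun s => ramp (2 * m - s) * ((1 + (-1 : ℝ) ^ s) / 2))
          (fun p q => (p : ℝ) * q * (((max p q : ℤ) : ℝ) - 1)) fun s hs => ?_
        have hs' : (2 * m : ℝ) < s := by exact_mod_cast hs
        rw [ramp_eq_zero (by linarith), zero_mul]
    _ = b / (8 * m) * ∑ k ∈ range m,
          2 * ((m : ℝ) - k - 1) * (k * (k + 1) * (11 * k ^ 2 + 25 * k + 12) / 6) := by
        rw [sum_Icc_one_two_mul]
        congr 1
        refine sum_congr rfl fun k hk => ?_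
        have hkm : (k : ℝ) + 1 ≤ m := by exact_mod_cast mem_range.mp hk
        have hramp : ramp (2 * m - ((2 * k + 2 : ℤ) : ℝ)) = 2 * ((m : ℝ) - k - 1) := by
          push_cast
          rw [ramp_eq_self (by linarith)]
          ring
        rw [one_add_neg_one_zpow_div_two_of_odd (by exact ⟨k, rfl⟩),
          one_add_neg_one_zpow_div_two_of_even (by exact ⟨k + 1, by ring⟩),
          sum_Icc_mul_sub_mul_max_sub_one, hramp]
        ring
    _ = b * (m ^ 2 - 1) * (m - 2) * (11 * m ^ 2 + 10 * m - 9) / 720 := by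
        rw [faulhaber]
        field_simp
        ring

theorem N_threehalf_one_general (b : ℝ) (N : ℤ → List ℤ → ℝ)
    (hzero : ZeroConvention N)
    (hinit : InitialConditions b N) (hrec : AsymRecursion b N) :
    ∀ L1 : ℤ, 0 < L1 → Even L1 →
      N 3 [L1] =
        b / 46080 * ((L1 : ℝ) ^ 2 - 4) * ((L1 : ℝ) - 4) *
          ((1 + b) * (17 * (L1 : ℝ) ^ 2 + 38 * (L1 : ℝ) - 60)
            + 30 * b ^ 2 * ((L1 : ℝ) ^ 2 - (L1 : ℝ))) := by
  intro L1 hL1 hev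
  obtain ⟨m, rfl⟩ : ∃ m : ℕ, L1 = 2 * m := by
    obtain ⟨t, rfl⟩ := hev
    exact ⟨t.toNat, by omega⟩
  have hm : 0 < m := by omega
  rw [N_three_singleton_eq hzero hrec hL1 hev, sum_mul_kerE_mul_N_one_one hinit hm,
    sum_mul_kerD_mul_N_half_two hinit hm]
  push_cast
  ring

/-- The value of `N_{3/2,1}` (recall `h = 2g`, so `h = 3`) at an even
positive boundary length `L₁`. -/
theorem N_threehalf_one (b : ℝ) (N : ℤ → List ℤ → ℝ)
    (hzero : ZeroConvention N) (hpar : ParitySupported N)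
    (hinit : InitialConditions b N) (hrec : AsymRecursion b N) :
    ∀ L1 : ℤ, 0 < L1 → Even L1 →
      N 3 [L1] =
        b / 46080 * ((L1 : ℝ) ^ 2 - 4) * ((L1 : ℝ) - 4) *
          ((1 + b) * (17 * (L1 : ℝ) ^ 2 + 38 * (L1 : ℝ) - 60)
            + 30 * b ^ 2 * ((L1 : ℝ) ^ 2 - (L1 : ℝ))) :=
  N_threehalf_one_general b N hzero hinit hrec

end
end

section
/- Let N be a parity-supported refined lattice family with values in the polynomial ring ℝ[b] (with b now an indeterminate, the initial conditions read as polynomial identities in b), satisfying the initial conditions and the asymmetric recursion at every (g,n,L) with 2g−2+n > 1 and L₁+⋯+L_n even. Then for every stable pair (g,n) and every L ∈ (ℤ_{>0})^n, the polynomial N_{g,n}(L) ∈ ℝ[b] has degree at most 2g in b. -/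
open scoped BigOperators

noncomputable section

open Polynomial

/-- Zero convention for a refined lattice family with values in `ℝ[b]`. -/
def PZeroConvention (N : ℤ → List ℤ → Polynomial ℝ) : Prop :=
  ∀ (h : ℤ) (L : List ℤ), h < 0 ∨ h + (L.length : ℤ) ≤ 2 → N h L = 0

/-- Parity support for a refined lattice family with values in `ℝ[b]`. -/
def PParitySupported (N : ℤ → List ℤ → Polynomial ℝ) : Prop :=
  ∀ (h : ℤ) (L : List ℤ), (∀ x ∈ L, 0 < x) → ¬ Even L.sum → N h L = 0

/-- The initial conditions, read as polynomial identities in the indeterminate `b = X`. -/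
def PInitialConditions (N : ℤ → List ℤ → Polynomial ℝ) : Prop :=
  (∀ L1 L2 L3 : ℤ, 0 < L1 → 0 < L2 → 0 < L3 →
    N 0 [L1, L2, L3] = C ((1 + (-1 : ℝ) ^ (L1 + L2 + L3)) / 2 * (1 / 2))) ∧
  (∀ L1 L2 : ℤ, 0 < L1 → 0 < L2 →
    N 1 [L1, L2] = C ((1 + (-1 : ℝ) ^ (L1 + L2)) / 2) *
      (X * C ((((max L1 L2 : ℤ) : ℝ) - 1) / 4))) ∧
  (∀ L1 : ℤ, 0 < L1 →
    N 2 [L1] = C ((1 + (-1 : ℝ) ^ L1) / 2) *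
      (((1 + X) * C ((L1 : ℝ) ^ 2 - 4) +
        X ^ 2 * C (5 * (L1 : ℝ) ^ 2 - 12 * (L1 : ℝ) + 4)) * C (1 / 96)))

/-- The asymmetric recursion at `(g, n, L)`, with values in `ℝ[b]` and `b = X`. -/
def PAsymRecAt (N : ℤ → List ℤ → Polynomial ℝ) (h : ℤ) (L1 : ℤ) (T : List ℤ) : Prop :=
  N h (L1 :: T) =
    (∑ m ∈ Finset.range T.length, ∑ p ∈ Finset.Icc 1 (L1 + T.getD m 0),
        C ((p : ℝ) * kerR (L1 : ℝ) ((T.getD m 0 : ℤ) : ℝ) (p : ℝ)) * N h (p :: T.eraseIdx m))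
    + X * (∑ p ∈ Finset.Icc 1 L1,
        C ((p : ℝ) * ((L1 : ℝ) - 1) * kerE (L1 : ℝ) (p : ℝ)) * N (h - 1) (p :: T))
    + ∑ p ∈ Finset.Icc 1 L1, ∑ q ∈ Finset.Icc 1 L1,
        C ((p : ℝ) * (q : ℝ) * kerD (L1 : ℝ) (p : ℝ) (q : ℝ)) *
          (C (1 / 2) * (1 + X) * N (h - 2) (p :: q :: T)
            + ∑ h1 ∈ Finset.Icc 0 h, ∑ S ∈ (Finset.range T.length).powerset,
                N h1 (p :: selectIdxs T S) * N (h - h1) (q :: removeIdxs T S))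

/-- The family satisfies the asymmetric recursion at every `(g, n, L)` with
`2g - 2 + n > 1`, `L ∈ (ℤ_{>0})ⁿ` and `L₁ + ⋯ + L_n` even. -/
def PAsymRecursion (N : ℤ → List ℤ → Polynomial ℝ) : Prop :=
  ∀ (h : ℤ) (L1 : ℤ) (T : List ℤ), 0 < L1 → (∀ x ∈ T, 0 < x) →
    3 < h + (1 + (T.length : ℤ)) → Even (L1 + T.sum) → PAsymRecAt N h L1 T

/-! The bound `deg_b N_{g,n}(L) ≤ 2g` follows by induction on `2g + n`. The initial
conditions have the right degree, and odd `L₁ + ⋯ + L_n` give `0`; otherwise the asymmetric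
recursion applies, and in each of its terms the kernels are constants while the degree in `b`
is balanced by the drop in `2g`: `b · N_{g-1/2}`, `(1 + b) · N_{g-1}`, and products
`N_{g₁} · N_{g₂}` with `g₁ + g₂ = g`. -/

theorem selectIdxs_length_add_removeIdxs_length {α : Type*} (L : List α) (S : Finset ℕ) :
    (selectIdxs L S).length + (removeIdxs L S).length = L.length := by
  unfold selectIdxs removeIdxs
  rw [← List.length_zipIdx (l := L) (i := 0)]
  induction L.zipIdx with
  | nil => rfl
  | cons a l ih => by_cases ha : a.2 ∈ S <;> simp [ha] <;> omega

theorem mem_of_mem_selectIdxs {α : Type*} {x : α} {L : List α} {S : Finset ℕ}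
    (hx : x ∈ selectIdxs L S) : x ∈ L := by
  obtain ⟨a, ha, hax⟩ := List.mem_filterMap.mp hx
  split at hax
  · cases hax; exact List.fst_mem_of_mem_zipIdx ha
  · cases hax

theorem mem_of_mem_removeIdxs {α : Type*} {x : α} {L : List α} {S : Finset ℕ}
    (hx : x ∈ removeIdxs L S) : x ∈ L := by
  obtain ⟨a, ha, hax⟩ := List.mem_filterMap.mp hx
  split at hax
  · cases hax
  · cases hax; exact List.fst_mem_of_mem_zipIdx ha

theorem Polynomial.natDegree_sum_C_mul_le {R ι : Type*} [Semiring R] (s : Finset ι) (c : ι → R)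
    (f : ι → R[X]) {d : ℕ} (hf : ∀ i ∈ s, (f i).natDegree ≤ d) :
    (∑ i ∈ s, C (c i) * f i).natDegree ≤ d :=
  natDegree_sum_le_of_forall_le _ _ fun i hi => (natDegree_C_mul_le _ _).trans (hf i hi)

def DegreeBoundBelow (N : ℤ → List ℤ → ℝ[X]) (k : ℕ) : Prop :=
  ∀ (h p : ℤ) (T : List ℤ), 0 < p → (∀ x ∈ T, 0 < x) → h.toNat + T.length < k →
    (N h (p :: T)).natDegree ≤ h.toNat

namespace DegreeBoundBelow

variable {N : ℤ → List ℤ → ℝ[X]} {h : ℤ} {T : List ℤ}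

theorem mono {j k : ℕ} (hjk : j ≤ k) (hk : DegreeBoundBelow N k) : DegreeBoundBelow N j :=
  fun h p T hp hT hlt => hk h p T hp hT (hlt.trans_le hjk)

theorem natDegree_kerR_sum_le (L1 : ℤ) (hT : ∀ x ∈ T, 0 < x)
    (ih : DegreeBoundBelow N (h.toNat + T.length)) :
    (∑ m ∈ Finset.range T.length, ∑ p ∈ Finset.Icc 1 (L1 + T.getD m 0),
        C ((p : ℝ) * kerR (L1 : ℝ) ((T.getD m 0 : ℤ) : ℝ) (p : ℝ)) *
          N h (p :: T.eraseIdx m)).natDegree ≤ h.toNat := by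
  refine natDegree_sum_le_of_forall_le _ _ fun m hm =>
    natDegree_sum_C_mul_le _ _ _ fun p hp => ?_
  have hm : m < T.length := Finset.mem_range.mp hm
  refine ih h p _ (Finset.mem_Icc.mp hp).1 (fun x hx => hT x (List.eraseIdx_subset hx)) ?_
  rw [List.length_eraseIdx_of_lt hm]
  omega

theorem natDegree_X_mul_kerE_sum_le (hzero : PZeroConvention N) (L1 : ℤ) (hT : ∀ x ∈ T, 0 < x)
    (ih : DegreeBoundBelow N (h.toNat + T.length)) :
    (X * ∑ p ∈ Finset.Icc 1 L1,
        C ((p : ℝ) * ((L1 : ℝ) - 1) * kerE (L1 : ℝ) (p : ℝ)) * N (h - 1) (p :: T)).natDegree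
      ≤ h.toNat := by
  obtain hh | hh := lt_or_ge h 1
  · simp [hzero (h - 1) _ (Or.inl (by omega))]
  · refine natDegree_mul_le.trans (le_trans (add_le_add natDegree_X_le
      (natDegree_sum_C_mul_le _ _ _ fun p hp =>
        ih (h - 1) p T (Finset.mem_Icc.mp hp).1 hT (by omega))) ?_)
    omega

theorem natDegree_C_mul_one_add_X_mul_le (hzero : PZeroConvention N) {p q : ℤ} (hp : 0 < p)
    (hq : 0 < q) (hT : ∀ x ∈ T, 0 < x) (ih : DegreeBoundBelow N (h.toNat + T.length)) :
    (C (1 / 2 : ℝ) * (1 + X) * N (h - 2) (p :: q :: T)).natDegree ≤ h.toNat := by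
  obtain hh | hh := lt_or_ge h 2
  · simp [hzero (h - 2) _ (Or.inl (by omega))]
  · have hN := ih (h - 2) p (q :: T) hp (List.forall_mem_cons.2 ⟨hq, hT⟩) (by simp; omega)
    have hcoeff : (C (1 / 2 : ℝ) * (1 + X)).natDegree ≤ 1 := by compute_degree
    exact natDegree_mul_le.trans (by omega)

theorem natDegree_mul_split_le (hzero : PZeroConvention N) {h₁ p q : ℤ} {A B : List ℤ}
    (hp : 0 < p) (hq : 0 < q) (hA : ∀ x ∈ A, 0 < x) (hB : ∀ x ∈ B, 0 < x)
    (hh₁ : h₁ ∈ Finset.Icc 0 h) (ih : DegreeBoundBelow N (h.toNat + (A.length + B.length))) :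
    (N h₁ (p :: A) * N (h - h₁) (q :: B)).natDegree ≤ h.toNat := by
  obtain ⟨h₁_nonneg, h₁_le⟩ := Finset.mem_Icc.mp hh₁
  by_cases hsmall : h₁.toNat + A.length < h.toNat + (A.length + B.length) ∧
      (h - h₁).toNat + B.length < h.toNat + (A.length + B.length)
  · have h₁A := ih h₁ p A hp hA hsmall.1
    have h₂B := ih (h - h₁) q B hq hB hsmall.2
    exact natDegree_mul_le.trans (by omega)
  · -- the factor not covered by the induction is `N 0 [x]`
    have hzero_factor : N h₁ (p :: A) = 0 ∨ N (h - h₁) (q :: B) = 0 := by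
      rcases not_and_or.mp hsmall with hbig | hbig
      · exact Or.inr (hzero _ _ (Or.inr (by simp; omega)))
      · exact Or.inl (hzero _ _ (Or.inr (by simp; omega)))
    rcases hzero_factor with h0 | h0 <;> simp [h0]

theorem natDegree_le_of_asymRecAt (hzero : PZeroConvention N) {L1 : ℤ} (hT : ∀ x ∈ T, 0 < x)
    (hrec : PAsymRecAt N h L1 T) (ih : DegreeBoundBelow N (h.toNat + T.length)) :
    (N h (L1 :: T)).natDegree ≤ h.toNat := by
  rw [hrec]
  refine natDegree_add_le_of_degree_le (natDegree_add_le_of_degree_le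
    (ih.natDegree_kerR_sum_le L1 hT) (ih.natDegree_X_mul_kerE_sum_le hzero L1 hT)) ?_
  refine natDegree_sum_le_of_forall_le _ _ fun p hp =>
    natDegree_sum_le_of_forall_le _ _ fun q hq => (natDegree_C_mul_le _ _).trans ?_
  have hp : 0 < p := (Finset.mem_Icc.mp hp).1
  have hq : 0 < q := (Finset.mem_Icc.mp hq).1
  refine natDegree_add_le_of_degree_le (ih.natDegree_C_mul_one_add_X_mul_le hzero hp hq hT) ?_
  refine natDegree_sum_le_of_forall_le _ _ fun h₁ hh₁ =>
    natDegree_sum_le_of_forall_le _ _ fun S _ => ?_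
  refine natDegree_mul_split_le hzero hp hq (fun x hx => hT x (mem_of_mem_selectIdxs hx))
    (fun x hx => hT x (mem_of_mem_removeIdxs hx)) hh₁ ?_
  rwa [selectIdxs_length_add_removeIdxs_length]

end DegreeBoundBelow

theorem PInitialConditions.natDegree_le {N : ℤ → List ℤ → ℝ[X]}
    (hinit : PInitialConditions N) {h : ℤ} {L : List ℤ} (hpos : ∀ x ∈ L, 0 < x)
    (hlen : 0 < L.length) (h_nonneg : 0 ≤ h) (hstable : h + (L.length : ℤ) = 3) :
    (N h L).natDegree ≤ h.toNat := by
  have h_le : h ≤ 2 := by omega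
  interval_cases h
  · obtain ⟨a, b, c, rfl⟩ := List.length_eq_three.mp (by omega : L.length = 3)
    rw [hinit.1 a b c (hpos a (by simp)) (hpos b (by simp)) (hpos c (by simp)), natDegree_C]
    rfl
  · obtain ⟨a, b, rfl⟩ := List.length_eq_two.mp (by omega : L.length = 2)
    rw [hinit.2.1 a b (hpos a (by simp)) (hpos b (by simp))]
    show _ ≤ 1
    compute_degree
  · obtain ⟨a, rfl⟩ := List.length_eq_one_iff.mp (by omega : L.length = 1)
    rw [hinit.2.2 a (hpos a (by simp))]
    show _ ≤ 2
    compute_degree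

theorem degreeBoundBelow {N : ℤ → List ℤ → ℝ[X]} (hzero : PZeroConvention N)
    (hpar : PParitySupported N) (hinit : PInitialConditions N) (hrec : PAsymRecursion N) :
    ∀ k, DegreeBoundBelow N k := by
  intro k
  induction k with
  | zero => intro _ _ _ _ _ hlt; omega
  | succ k ih =>
    intro h p T hp hT hlt
    have hpos : ∀ x ∈ p :: T, 0 < x := List.forall_mem_cons.2 ⟨hp, hT⟩
    by_cases hunstable : h < 0 ∨ h + ((p :: T).length : ℤ) ≤ 2
    · simp [hzero h _ hunstable]
    by_cases heven : Even (p :: T).sum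
    swap
    · simp [hpar h _ hpos heven]
    by_cases hbase : h + ((p :: T).length : ℤ) = 3
    · exact hinit.natDegree_le hpos (by simp) (by omega) hbase
    simp only [List.length_cons, List.sum_cons, Nat.cast_add, Nat.cast_one] at hunstable heven hbase
    exact (ih.mono (by omega)).natDegree_le_of_asymRecAt hzero hT
      (hrec h p T hp hT (by omega) heven)

/-- For a parity-supported refined lattice family with values in
`ℝ[b]` satisfying the initial conditions and the asymmetric recursion, the polynomial
`N_{g,n}(L)` has degree at most `2g` in `b`, for every stable `(g,n)` and positive `L`. -/
theorem N_degree_le (N : ℤ → List ℤ → Polynomial ℝ)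
    (hzero : PZeroConvention N) (hpar : PParitySupported N)
    (hinit : PInitialConditions N) (hrec : PAsymRecursion N) :
    ∀ (h : ℤ) (L : List ℤ), 0 ≤ h → (∀ x ∈ L, 0 < x) → 0 < L.length →
      2 < h + (L.length : ℤ) → (N h L).natDegree ≤ h.toNat := by
  intro h L _ hpos hlen _
  obtain ⟨p, T, rfl⟩ := List.exists_cons_of_length_pos hlen
  exact degreeBoundBelow hzero hpar hinit hrec (h.toNat + T.length + 1) h p T
    (hpos p List.mem_cons_self) (fun x hx => hpos x (List.mem_cons_of_mem _ hx)) (by omega)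

end
end

section
/- Let n ≥ 1 and let S be a subset of {e_i + e_j : 1 ≤ i, j ≤ n} ⊆ ℚ^n (including the vectors 2e_i = e_i + e_i). If the ℚ-linear span of S has dimension n−1, then there exists a nonzero vector u ∈ ℤ^n with every entry in {−1, 0, +1} such that the standard inner product ⟨u, v⟩ equals 0 for every v ∈ S. -/
open scoped BigOperators

/-!
The span of `S` is a proper subspace, so some nonzero linear functional `f` vanishes on it.
Writing `w k = f eₖ`, vanishing on `eᵢ + eⱼ` says `w j = -w i`. Fix `c = w i₀ ≠ 0`; recording
only whether `w k` equals `c`, `-c` or neither gives a `{-1, 0, 1}`-vector that still satisfies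
`uᵢ + uⱼ = 0` for every edge of `S`, and `uᵢ₀ = 1`.
-/

section SignPattern

variable {ι A : Type*} [AddGroup A] [DecidableEq A]

def signPattern (w : ι → A) (c : A) (k : ι) : ℤ :=
  if w k = c then 1 else if w k = -c then -1 else 0

lemma signPattern_trichotomy (w : ι → A) (c : A) (k : ι) :
    signPattern w c k = -1 ∨ signPattern w c k = 0 ∨ signPattern w c k = 1 := by
  unfold signPattern
  split_ifs <;> simp

lemma signPattern_ne_zero {w : ι → A} {i : ι} : signPattern w (w i) ≠ 0 :=
  fun h => by simpa [signPattern] using congrFun h i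

lemma signPattern_add_eq_zero {w : ι → A} {c : A} (hc : -c ≠ c) {i j : ι}
    (hij : w i + w j = 0) : signPattern w c i + signPattern w c j = 0 := by
  have hj : w j = -w i := eq_neg_of_add_eq_zero_right hij
  unfold signPattern
  rw [hj]
  by_cases h₁ : w i = c
  · simp [h₁, hc]
  by_cases h₂ : w i = -c
  · simp [h₂, hc]
  have h₃ : -w i ≠ c := fun h => h₂ (by rw [← h, neg_neg])
  have h₄ : -w i ≠ -c := fun h => h₁ (neg_injective h)
  simp [h₁, h₂, h₃, h₄]

end SignPattern

lemma exists_ne_zero_forall_eq_zero_of_finrank_span_lt {K V : Type*} [Field K] [AddCommGroup V]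
    [Module K V] [FiniteDimensional K V] {S : Set V}
    (hS : Module.finrank K (Submodule.span K S) < Module.finrank K V) :
    ∃ f : Module.Dual K V, f ≠ 0 ∧ ∀ v ∈ S, f v = 0 := by
  obtain ⟨f, hf, hker⟩ :=
    (Submodule.span K S).exists_le_ker_of_lt_top (Submodule.lt_top_of_finrank_lt_finrank hS)
  exact ⟨f, hf, fun v hv => hker (Submodule.subset_span hv)⟩

lemma exists_apply_single_ne_zero {K ι : Type*} [Field K] [Fintype ι] [DecidableEq ι]
    {f : Module.Dual K (ι → K)} (hf : f ≠ 0) : ∃ i, f (Pi.single i 1) ≠ 0 := by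
  by_contra! h
  exact hf ((Pi.basisFun K ι).ext fun i => by simpa using h i)

/-- Let `S` be a set of vectors of the form `eᵢ + eⱼ` in `ℚⁿ`
(including the vectors `2eᵢ = eᵢ + eᵢ`). If the `ℚ`-span of `S` has dimension `n - 1`,
then there is a nonzero integer vector `u` with entries in `{-1, 0, 1}` orthogonal to
every element of `S`. -/
theorem exists_sign_vector_orthogonal (n : ℕ) (hn : 1 ≤ n) (S : Set (Fin n → ℚ))
    (hS : S ⊆ {v : Fin n → ℚ | ∃ i j : Fin n, v = Pi.single i 1 + Pi.single j 1})
    (hdim : Module.finrank ℚ (Submodule.span ℚ S) = n - 1) :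
    ∃ u : Fin n → ℤ, u ≠ 0 ∧ (∀ k, u k = -1 ∨ u k = 0 ∨ u k = 1) ∧
      ∀ v ∈ S, (∑ k, (u k : ℚ) * v k) = 0 := by
  obtain ⟨f, hf, hfS⟩ := exists_ne_zero_forall_eq_zero_of_finrank_span_lt (K := ℚ) (S := S)
    (by rw [hdim, Module.finrank_fin_fun]; omega)
  set w : Fin n → ℚ := fun k => f (Pi.single k 1)
  obtain ⟨i₀, hi₀⟩ := exists_apply_single_ne_zero hf
  refine ⟨signPattern w (w i₀), signPattern_ne_zero, signPattern_trichotomy w (w i₀), ?_⟩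
  rintro v hv
  obtain ⟨i, j, rfl⟩ := hS hv
  have hij : w i + w j = 0 := by simpa using hfS _ hv
  have hsign := signPattern_add_eq_zero (neg_ne_self.mpr hi₀) hij
  change (fun k => (signPattern w (w i₀) k : ℚ)) ⬝ᵥ (Pi.single i 1 + Pi.single j 1) = 0
  rw [dotProduct_add, dotProduct_single, dotProduct_single, mul_one, mul_one]
  exact_mod_cast hsign
end
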